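/- arXiv:1310.6220 — 3 statements merged into one kernel-verified Lean document; each statement's English description precedes it below -/
import Mathlib

section
/- If z = (z_1,...,z_{q-1}) with all z_i > 0 satisfies the system z_i = ((θ-1)z_i + Σ_{j=1}^{q-1} z_j + 1)^k / (θ + Σ_{j=1}^{q-1} z_j)^k for i = 1,...,q-1 (with θ > 1, k ≥ 2), then there exists a subset M ⊆ {1,...,q-1} and a real z* > 0 such that z_i = 1 for i ∉ M and z_i = z* for i ∈ M. -/
/-- Proposition 1: any positive solution of the fixed point system has at most
two distinct values, one of which is 1. -/
theorem stmt_0 (q k : ℕ) (hq : 2 ≤ q) (hk : 2 ≤ k) (θ : ℝ) (hθ : 1 < θ)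
    (z : Fin (q - 1) → ℝ) (hpos : ∀ i, 0 < z i)
    (hfix : ∀ i, z i =
      ((θ - 1) * z i + (∑ j, z j) + 1) ^ k / (θ + (∑ j, z j)) ^ k) :
    ∃ (M : Finset (Fin (q - 1))) (zs : ℝ), 0 < zs ∧
      ∀ i, (i ∉ M → z i = 1) ∧ (i ∈ M → z i = zs) := by
  classical
  set S := ∑ j, z j with hS
  have hSnn : 0 ≤ S := Finset.sum_nonneg fun j _ => (hpos j).le
  have hD : 0 < θ + S := by linarith
  have hθ1 : 0 < θ - 1 := by linarith
  have hDk : (0:ℝ) < (θ + S) ^ k := pow_pos hD k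
  -- one is always a fixed point
  have one_fix : (1:ℝ) = ((θ - 1) * 1 + S + 1) ^ k / (θ + S) ^ k := by
    have h1 : (θ - 1) * 1 + S + 1 = θ + S := by ring
    rw [h1, div_self hDk.ne']
  -- subkey: two distinct fixed points give a geometric-sum identity
  have subkey : ∀ x y : ℝ,
      x = ((θ - 1) * x + S + 1) ^ k / (θ + S) ^ k →
      y = ((θ - 1) * y + S + 1) ^ k / (θ + S) ^ k →
      x ≠ y →
      (θ + S) ^ k = (θ - 1) *
        ∑ i ∈ Finset.range k,
          ((θ - 1) * x + S + 1) ^ i * ((θ - 1) * y + S + 1) ^ (k - 1 - i) := by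
    intro x y hx hy hxy
    set X := (θ - 1) * x + S + 1 with hX
    set Y := (θ - 1) * y + S + 1 with hY
    have hx' : x * (θ + S) ^ k = X ^ k := by
      rw [hx]; field_simp
    have hy' : y * (θ + S) ^ k = Y ^ k := by
      rw [hy]; field_simp
    have hfac : (∑ i ∈ Finset.range k, X ^ i * Y ^ (k - 1 - i)) * (X - Y)
        = X ^ k - Y ^ k := geom_sum₂_mul X Y k
    have hXY : X - Y = (θ - 1) * (x - y) := by rw [hX, hY]; ring
    have hmain : (x - y) * (θ + S) ^ k
        = (x - y) * ((θ - 1) * ∑ i ∈ Finset.range k, X ^ i * Y ^ (k - 1 - i)) := by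
      have : (x - y) * (θ + S) ^ k = X ^ k - Y ^ k := by
        rw [sub_mul, hx', hy']
      rw [this, ← hfac, hXY]; ring
    exact mul_left_cancel₀ (sub_ne_zero.mpr hxy) hmain
  -- key: any two positive fixed points different from 1 are equal
  have key : ∀ a b : ℝ, 0 < a → 0 < b → a ≠ 1 → b ≠ 1 →
      a = ((θ - 1) * a + S + 1) ^ k / (θ + S) ^ k →
      b = ((θ - 1) * b + S + 1) ^ k / (θ + S) ^ k → a = b := by
    intro a b ha hb ha1 hb1 hfa hfb
    set A := (θ - 1) * a + S + 1 with hA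
    set B := (θ - 1) * b + S + 1 with hB
    have hApos : 0 < A := by rw [hA]; nlinarith
    have hBpos : 0 < B := by rw [hB]; nlinarith
    have hone : (θ - 1) * 1 + S + 1 = θ + S := by ring
    have EA := subkey 1 a one_fix hfa (fun h => ha1 h.symm)
    have EB := subkey 1 b one_fix hfb (fun h => hb1 h.symm)
    rw [hone] at EA EB
    have hsum : (∑ i ∈ Finset.range k, (θ + S) ^ i * A ^ (k - 1 - i))
        = ∑ i ∈ Finset.range k, (θ + S) ^ i * B ^ (k - 1 - i) :=
      mul_left_cancel₀ hθ1.ne' (EA.symm.trans EB)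
    -- strict monotonicity of the sum in the second variable
    have mono : ∀ U V : ℝ, 0 < U → U < V →
        (∑ i ∈ Finset.range k, (θ + S) ^ i * U ^ (k - 1 - i))
        < ∑ i ∈ Finset.range k, (θ + S) ^ i * V ^ (k - 1 - i) := by
      intro U V hU hUV
      apply Finset.sum_lt_sum
      · intro i _
        exact mul_le_mul_of_nonneg_left
          (pow_le_pow_left₀ hU.le hUV.le _) (pow_nonneg hD.le i)
      · refine ⟨0, Finset.mem_range.mpr (by omega), ?_⟩
        simp only [pow_zero, one_mul, Nat.sub_zero]
        exact pow_lt_pow_left₀ hUV hU.le (by omega)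
    have hAB : A = B := by
      rcases lt_trichotomy A B with h | h | h
      · exact absurd hsum (ne_of_lt (mono A B hApos h))
      · exact h
      · exact absurd hsum.symm (ne_of_lt (mono B A hBpos h))
    have : (θ - 1) * a = (θ - 1) * b := by
      rw [hA, hB] at hAB; linarith
    exact mul_left_cancel₀ hθ1.ne' this
  by_cases hex : ∃ i, z i ≠ 1
  · obtain ⟨i₀, hi₀⟩ := hex
    refine ⟨Finset.univ.filter (fun i => z i ≠ 1), z i₀, hpos i₀, fun i => ⟨?_, ?_⟩⟩
    · intro hi
      simp only [Finset.mem_filter, Finset.mem_univ, true_and, not_not] at hi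
      exact hi
    · intro hi
      simp only [Finset.mem_filter, Finset.mem_univ, true_and] at hi
      exact key (z i) (z i₀) (hpos i) (hpos i₀) hi hi₀ (hfix i) (hfix i₀)
  · push_neg at hex
    exact ⟨∅, 1, one_pos, fun i => ⟨fun _ => hex i, fun h => absurd h (Finset.notMem_empty i)⟩⟩
end

section
/- The function ξ(x) = q·(Σ_{i=1}^{k-1} i x^{i-1}) / (Σ_{i=1}^{k-1} i (x^{i-1} + x^{2k-i-1})) is strictly decreasing on (0, ∞), with derivative ξ'(x) = -q·(Σ_{i=1}^{k-1} Σ_{j=1}^{k-1} i j (2k-i-j) x^{2k+i-j-3}) / (Σ_{i=1}^{k-1} i (x^{i-1} + x^{2k-i-1}))² < 0. -/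
open Finset


lemma key_id (k : ℕ) (hk : 2 ≤ k) (x : ℝ) :
    (∑ i ∈ Icc 1 (k-1), (i:ℝ) * (↑(i-1) * x ^ (i-1-1))) *
      (∑ j ∈ Icc 1 (k-1), (j:ℝ) * (x ^ (j-1) + x ^ (2*k-j-1)))
    - (∑ i ∈ Icc 1 (k-1), (i:ℝ) * x ^ (i-1)) *
      (∑ j ∈ Icc 1 (k-1), (j:ℝ) * (↑(j-1) * x ^ (j-1-1) + ↑(2*k-j-1) * x ^ (2*k-j-1-1)))
    = - ∑ i ∈ Icc 1 (k-1), ∑ j ∈ Icc 1 (k-1),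
        (i:ℝ) * (j:ℝ) * (2*(k:ℝ) - i - j) * x ^ (2*k+i-j-3) := by
  rw [Finset.sum_mul_sum, Finset.sum_mul_sum, ← Finset.sum_sub_distrib]
  simp only [← Finset.sum_sub_distrib]
  have hsplit : ∀ i ∈ Icc 1 (k-1), ∀ j ∈ Icc 1 (k-1),
      ((i:ℝ) * (↑(i-1) * x ^ (i-1-1))) * ((j:ℝ) * (x ^ (j-1) + x ^ (2*k-j-1)))
      - ((i:ℝ) * x ^ (i-1)) * ((j:ℝ) * (↑(j-1) * x ^ (j-1-1) + ↑(2*k-j-1) * x ^ (2*k-j-1-1)))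
      = ( (i:ℝ) * ↑(i-1) * x ^ (i-1-1) * (j:ℝ) * x ^ (j-1)
          - (i:ℝ) * x ^ (i-1) * (j:ℝ) * ↑(j-1) * x ^ (j-1-1) )
        + ( (i:ℝ) * ↑(i-1) * x ^ (i-1-1) * (j:ℝ) * x ^ (2*k-j-1)
          - (i:ℝ) * x ^ (i-1) * (j:ℝ) * ↑(2*k-j-1) * x ^ (2*k-j-1-1) ) := by
    intro i _ j _; ring
  rw [Finset.sum_congr rfl (fun i hi => Finset.sum_congr rfl (fun j hj => hsplit i hi j hj))]
  simp only [Finset.sum_add_distrib]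
  have h1 : ∑ i ∈ Icc 1 (k-1), ∑ j ∈ Icc 1 (k-1),
      ( (i:ℝ) * ↑(i-1) * x ^ (i-1-1) * (j:ℝ) * x ^ (j-1)
        - (i:ℝ) * x ^ (i-1) * (j:ℝ) * ↑(j-1) * x ^ (j-1-1) ) = 0 := by
    simp only [Finset.sum_sub_distrib]
    rw [sub_eq_zero, Finset.sum_comm]
    apply Finset.sum_congr rfl; intro i _; apply Finset.sum_congr rfl; intro j _; ring
  rw [h1, zero_add, ← Finset.sum_neg_distrib]
  apply Finset.sum_congr rfl; intro i hi
  rw [← Finset.sum_neg_distrib]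
  apply Finset.sum_congr rfl; intro j hj
  simp only [mem_Icc] at hi hj
  have hjk : j + 1 ≤ 2*k := by omega
  have hc1 : ((2*k-j-1 : ℕ) : ℝ) = 2*(k:ℝ) - j - 1 := by
    have h : 2*k-j-1 = 2*k - (j+1) := by omega
    rw [h, Nat.cast_sub hjk]; push_cast; ring
  rcases Nat.lt_or_ge i 2 with hi2 | hi2
  · have : i = 1 := by omega
    subst this
    have he : 2*k-1-1-1 = 2*k+1-j-3 + (2*k-1-1 - (2*k+1-j-3) - 1) + 1 ∨ True := by right; trivial
    have he2 : 2*k-j-1-1 = 2*k+1-j-3 := by omega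
    rw [he2]
    simp only [Nat.sub_self, Nat.cast_zero, Nat.cast_one]
    rw [hc1]; ring
  · have hi1 : ((i-1 : ℕ) : ℝ) = (i:ℝ) - 1 := by
      rw [Nat.cast_sub hi.1]; push_cast; ring
    have p1 : x ^ (i-1-1) * x ^ (2*k-j-1) = x ^ (2*k+i-j-3) := by
      rw [← pow_add]; congr 1; omega
    have p2 : x ^ (i-1) * x ^ (2*k-j-1-1) = x ^ (2*k+i-j-3) := by
      rw [← pow_add]; congr 1; omega
    rw [hc1, hi1]
    linear_combination ((i:ℝ) * ((i:ℝ)-1) * j) * p1 - ((i:ℝ) * j * (2*(k:ℝ)-j-1)) * p2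

lemma key_deriv (k q : ℕ) (hk : 2 ≤ k) (x : ℝ) (hx : 0 < x) :
    HasDerivAt (fun y : ℝ => (q : ℝ) * (∑ i ∈ Icc 1 (k-1), (i:ℝ) * y ^ (i-1)) /
        (∑ i ∈ Icc 1 (k-1), (i:ℝ) * (y ^ (i-1) + y ^ (2*k-i-1))))
      (-(q : ℝ) * (∑ i ∈ Icc 1 (k-1), ∑ j ∈ Icc 1 (k-1),
          (i:ℝ) * (j:ℝ) * (2*(k:ℝ) - i - j) * x ^ (2*k+i-j-3)) /
        (∑ i ∈ Icc 1 (k-1), (i:ℝ) * (x ^ (i-1) + x ^ (2*k-i-1))) ^ 2) x := by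
  have hne : (Icc 1 (k-1)).Nonempty := ⟨1, by simp; omega⟩
  have hD : 0 < ∑ i ∈ Icc 1 (k-1), (i:ℝ) * (x ^ (i-1) + x ^ (2*k-i-1)) := by
    apply Finset.sum_pos _ hne
    intro i hi
    simp only [mem_Icc] at hi
    have h1 : (0:ℝ) < i := by exact_mod_cast hi.1
    have h2 : (0:ℝ) < x ^ (i-1) + x ^ (2*k-i-1) := by positivity
    exact mul_pos h1 h2
  have hN : HasDerivAt (fun y : ℝ => (q:ℝ) * ∑ i ∈ Icc 1 (k-1), (i:ℝ) * y ^ (i-1))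
      ((q:ℝ) * ∑ i ∈ Icc 1 (k-1), (i:ℝ) * (↑(i-1) * x ^ (i-1-1))) x := by
    apply HasDerivAt.const_mul
    apply HasDerivAt.fun_sum
    intro i _
    exact (hasDerivAt_pow (i-1) x).const_mul (i:ℝ)
  have hDd : HasDerivAt (fun y : ℝ => ∑ i ∈ Icc 1 (k-1), (i:ℝ) * (y ^ (i-1) + y ^ (2*k-i-1)))
      (∑ i ∈ Icc 1 (k-1), (i:ℝ) * (↑(i-1) * x ^ (i-1-1) + ↑(2*k-i-1) * x ^ (2*k-i-1-1))) x := by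
    apply HasDerivAt.fun_sum
    intro i _
    exact ((hasDerivAt_pow (i-1) x).add (hasDerivAt_pow (2*k-i-1) x)).const_mul (i:ℝ)
  have h := (hN.fun_div hDd (ne_of_gt hD))
  refine h.congr_deriv ?_
  symm
  rw [div_eq_div_iff (by positivity) (by positivity)]
  have key := key_id k hk x
  linear_combination (-(q:ℝ) * (∑ i ∈ Icc 1 (k-1), (i:ℝ) * (x ^ (i-1) + x ^ (2*k-i-1))) ^ 2) * key

/-- ξ is strictly decreasing on (0,∞), with the explicit negative derivative. -/
theorem stmt_16 (k q : ℕ) (hk : 2 ≤ k) (hq : 2 ≤ q) (ξ : ℝ → ℝ)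
    (hξ : ∀ x : ℝ, ξ x = (q : ℝ) * (∑ i ∈ Finset.Icc 1 (k - 1), (i : ℝ) * x ^ (i - 1)) /
      (∑ i ∈ Finset.Icc 1 (k - 1), (i : ℝ) * (x ^ (i - 1) + x ^ (2 * k - i - 1)))) :
    StrictAntiOn ξ (Set.Ioi (0 : ℝ)) ∧
    ∀ x : ℝ, 0 < x → HasDerivAt ξ
      (-(q : ℝ) * (∑ i ∈ Finset.Icc 1 (k - 1), ∑ j ∈ Finset.Icc 1 (k - 1),
          (i : ℝ) * (j : ℝ) * (2 * (k : ℝ) - i - j) * x ^ (2 * k + i - j - 3)) /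
        (∑ i ∈ Finset.Icc 1 (k - 1), (i : ℝ) * (x ^ (i - 1) + x ^ (2 * k - i - 1))) ^ 2) x := by
  have hfun : ξ = fun y : ℝ => (q : ℝ) * (∑ i ∈ Icc 1 (k-1), (i:ℝ) * y ^ (i-1)) /
      (∑ i ∈ Icc 1 (k-1), (i:ℝ) * (y ^ (i-1) + y ^ (2*k-i-1))) := funext hξ
  have hder : ∀ x : ℝ, 0 < x → HasDerivAt ξ
      (-(q : ℝ) * (∑ i ∈ Icc 1 (k-1), ∑ j ∈ Icc 1 (k-1),
          (i:ℝ) * (j:ℝ) * (2*(k:ℝ) - i - j) * x ^ (2*k+i-j-3)) /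
        (∑ i ∈ Icc 1 (k-1), (i:ℝ) * (x ^ (i-1) + x ^ (2*k-i-1))) ^ 2) x := by
    intro x hx
    rw [hfun]
    exact key_deriv k q hk x hx
  refine ⟨?_, hder⟩
  have hne : (Icc 1 (k-1)).Nonempty := ⟨1, by simp; omega⟩
  have hneg : ∀ x : ℝ, 0 < x → deriv ξ x < 0 := by
    intro x hx
    rw [(hder x hx).deriv]
    have hD : 0 < ∑ i ∈ Icc 1 (k-1), (i:ℝ) * (x ^ (i-1) + x ^ (2*k-i-1)) := by
      apply Finset.sum_pos _ hne
      intro i hi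
      simp only [mem_Icc] at hi
      have h1 : (0:ℝ) < i := by exact_mod_cast hi.1
      have h2 : (0:ℝ) < x ^ (i-1) + x ^ (2*k-i-1) := by positivity
      exact mul_pos h1 h2
    have hS : 0 < ∑ i ∈ Icc 1 (k-1), ∑ j ∈ Icc 1 (k-1),
        (i:ℝ) * (j:ℝ) * (2*(k:ℝ) - i - j) * x ^ (2*k+i-j-3) := by
      apply Finset.sum_pos _ hne
      intro i hi
      apply Finset.sum_pos _ hne
      intro j hj
      simp only [mem_Icc] at hi hj
      have h1 : (0:ℝ) < i := by exact_mod_cast hi.1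
      have h2 : (0:ℝ) < j := by exact_mod_cast hj.1
      have h3 : (i:ℝ) + 1 ≤ k := by exact_mod_cast Nat.add_le_of_le_sub (by omega) hi.2
      have h4 : (j:ℝ) + 1 ≤ k := by exact_mod_cast Nat.add_le_of_le_sub (by omega) hj.2
      have h5 : (0:ℝ) < 2*(k:ℝ) - i - j := by linarith
      exact mul_pos (mul_pos (mul_pos h1 h2) h5) (pow_pos hx _)
    have hq0 : (0:ℝ) < q := by positivity
    have : (0:ℝ) < (q:ℝ) * (∑ i ∈ Icc 1 (k-1), ∑ j ∈ Icc 1 (k-1),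
        (i:ℝ) * (j:ℝ) * (2*(k:ℝ) - i - j) * x ^ (2*k+i-j-3)) /
        (∑ i ∈ Icc 1 (k-1), (i:ℝ) * (x ^ (i-1) + x ^ (2*k-i-1))) ^ 2 :=
      div_pos (mul_pos hq0 hS) (by positivity)
    rw [neg_mul, neg_div]
    linarith
  apply strictAntiOn_of_deriv_neg (convex_Ioi 0)
  · intro x hx
    exact ((hder x hx).differentiableAt.continuousAt).continuousWithinAt
  · intro x hx
    rw [interior_Ioi] at hx
    exact hneg x hx
end

section
/- The function η(x) = 1 + (ξ(x)·(x^k - 1) + q) / (Σ_{i=1}^{k-1} x^i), where ξ(x) = q·(Σ_{i=1}^{k-1} i x^{i-1}) / (Σ_{i=1}^{k-1} i (x^{i-1} + x^{2k-i-1})), is strictly decreasing on (1, ∞), and η(1) = 1 + q/(k-1). -/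
/-- η(x) = 1 + (ξ(x)(x^k - 1) + q)/∑_{i=1}^{k-1} x^i is strictly decreasing on
(1,∞) and η(1) = 1 + q/(k-1). -/
theorem stmt_18 (k q : ℕ) (hk : 2 ≤ k) (hq : 2 ≤ q) (ξ η : ℝ → ℝ)
    (hξ : ∀ x : ℝ, ξ x = (q : ℝ) * (∑ i ∈ Finset.Icc 1 (k - 1), (i : ℝ) * x ^ (i - 1)) /
      (∑ i ∈ Finset.Icc 1 (k - 1), (i : ℝ) * (x ^ (i - 1) + x ^ (2 * k - i - 1))))
    (hη : ∀ x : ℝ, η x = 1 + (ξ x * (x ^ k - 1) + (q : ℝ)) /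
      (∑ i ∈ Finset.Icc 1 (k - 1), x ^ i)) :
    StrictAntiOn η (Set.Ioi (1 : ℝ)) ∧ η 1 = 1 + (q : ℝ) / ((k : ℝ) - 1) := by
  have hne : (Finset.Icc 1 (k - 1)).Nonempty := ⟨1, by simp; omega⟩
  have hmem : ∀ i ∈ Finset.Icc 1 (k - 1), 1 ≤ i ∧ i ≤ k - 1 := by
    intro i hi; simpa using Finset.mem_Icc.mp hi
  -- positivity of T
  have hT : ∀ x : ℝ, 0 < x →
      0 < ∑ i ∈ Finset.Icc 1 (k - 1), (i : ℝ) * (x ^ (i - 1) + x ^ (2 * k - i - 1)) := by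
    intro x hx
    apply Finset.sum_pos _ hne
    intro i hi
    have h1 : 1 ≤ i := (hmem i hi).1
    have hi0 : (0 : ℝ) < i := by exact_mod_cast h1
    positivity
  have hP : ∀ x : ℝ, 0 < x → 0 < ∑ i ∈ Finset.Icc 1 (k - 1), x ^ i := by
    intro x hx
    exact Finset.sum_pos (fun i _ => by positivity) hne
  -- the key algebraic identity
  have hid : ∀ x : ℝ,
      (∑ i ∈ Finset.Icc 1 (k - 1), (i : ℝ) * x ^ (i - 1)) * (x ^ k - 1) +
        (∑ i ∈ Finset.Icc 1 (k - 1), (i : ℝ) * (x ^ (i - 1) + x ^ (2 * k - i - 1)))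
      = (k : ℝ) * x ^ (k - 1) * ∑ i ∈ Finset.Icc 1 (k - 1), x ^ i := by
    intro x
    have e1 : (∑ i ∈ Finset.Icc 1 (k - 1), (i : ℝ) * x ^ (i - 1)) * (x ^ k - 1) +
        (∑ i ∈ Finset.Icc 1 (k - 1), (i : ℝ) * (x ^ (i - 1) + x ^ (2 * k - i - 1)))
        = ∑ i ∈ Finset.Icc 1 (k - 1),
            ((i : ℝ) * x ^ ((k - 1) + i) + (i : ℝ) * x ^ (2 * k - i - 1)) := by
      rw [Finset.sum_mul, ← Finset.sum_add_distrib]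
      apply Finset.sum_congr rfl
      intro i hi
      obtain ⟨h1, h2⟩ := hmem i hi
      have he : (k - 1) + i = (i - 1) + k := by omega
      rw [he, pow_add]
      ring
    have e2 : ∑ i ∈ Finset.Icc 1 (k - 1), (i : ℝ) * x ^ (2 * k - i - 1)
        = ∑ i ∈ Finset.Icc 1 (k - 1), ((k : ℝ) - (i : ℝ)) * x ^ ((k - 1) + i) := by
      apply Finset.sum_nbij' (fun i => k - i) (fun i => k - i)
      · intro i hi; obtain ⟨h1, h2⟩ := hmem i hi; simp [Finset.mem_Icc]; omega
      · intro i hi; obtain ⟨h1, h2⟩ := hmem i hi; simp [Finset.mem_Icc]; omega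
      · intro i hi; obtain ⟨h1, h2⟩ := hmem i hi; omega
      · intro i hi; obtain ⟨h1, h2⟩ := hmem i hi; omega
      · intro i hi
        obtain ⟨h1, h2⟩ := hmem i hi
        have hc : ((k - i : ℕ) : ℝ) = (k : ℝ) - (i : ℝ) := by
          have : i ≤ k := by omega
          push_cast [this]; ring
        have he : (k - 1) + (k - i) = 2 * k - i - 1 := by omega
        rw [hc, he]
        ring
    rw [e1, Finset.sum_add_distrib, e2, ← Finset.sum_add_distrib, Finset.mul_sum]
    apply Finset.sum_congr rfl
    intro i hi
    rw [pow_add]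
    ring
  -- nicer form of η on positive reals
  have hform : ∀ x : ℝ, 0 < x → η x = 1 + (q : ℝ) * (k : ℝ) * x ^ (k - 1) /
      (∑ i ∈ Finset.Icc 1 (k - 1), (i : ℝ) * (x ^ (i - 1) + x ^ (2 * k - i - 1))) := by
    intro x hx
    have hT' := (hT x hx).ne'
    have hP' := (hP x hx).ne'
    rw [hη, hξ]
    have step : ((q : ℝ) * (∑ i ∈ Finset.Icc 1 (k - 1), (i : ℝ) * x ^ (i - 1)) /
        (∑ i ∈ Finset.Icc 1 (k - 1), (i : ℝ) * (x ^ (i - 1) + x ^ (2 * k - i - 1)))) *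
          (x ^ k - 1) + (q : ℝ)
        = ((q : ℝ) * ((k : ℝ) * x ^ (k - 1) * ∑ i ∈ Finset.Icc 1 (k - 1), x ^ i)) /
          (∑ i ∈ Finset.Icc 1 (k - 1), (i : ℝ) * (x ^ (i - 1) + x ^ (2 * k - i - 1))) := by
      rw [div_mul_eq_mul_div, div_add' _ _ _ hT', eq_div_iff hT',
        div_mul_cancel₀ _ hT']
      linear_combination (q : ℝ) * hid x
    rw [step]
    field_simp
  -- key inequality
  have key : ∀ a b : ℝ, 1 < a → a < b →
      b ^ (k - 1) * (∑ i ∈ Finset.Icc 1 (k - 1), (i : ℝ) * (a ^ (i - 1) + a ^ (2 * k - i - 1)))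
      < a ^ (k - 1) * (∑ i ∈ Finset.Icc 1 (k - 1), (i : ℝ) * (b ^ (i - 1) + b ^ (2 * k - i - 1))) := by
    intro a b ha hab
    have ha0 : (0 : ℝ) < a := lt_trans one_pos ha
    have hb1 : (1 : ℝ) < b := lt_trans ha hab
    rw [Finset.mul_sum, Finset.mul_sum]
    apply Finset.sum_lt_sum_of_nonempty hne
    intro i hi
    obtain ⟨h1, h2⟩ := hmem i hi
    have hi0 : (0 : ℝ) < i := by exact_mod_cast h1
    have hab1 : 1 < a * b := by nlinarith
    have h3 : (a * b) ^ (i - 1) < (a * b) ^ (k - 1) := pow_lt_pow_right₀ hab1 (by omega)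
    rw [mul_pow, mul_pow] at h3
    have h4 : a ^ (k - i) < b ^ (k - i) := pow_lt_pow_left₀ hab (le_of_lt ha0) (by omega)
    have p1 : b ^ (k - 1) = b ^ (i - 1) * b ^ (k - i) := by rw [← pow_add]; congr 1; omega
    have p2 : a ^ (k - 1) = a ^ (i - 1) * a ^ (k - i) := by rw [← pow_add]; congr 1; omega
    have p3 : a ^ (2 * k - i - 1) = a ^ (k - 1) * a ^ (k - i) := by
      rw [← pow_add]; congr 1; omega
    have p4 : b ^ (2 * k - i - 1) = b ^ (k - 1) * b ^ (k - i) := by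
      rw [← pow_add]; congr 1; omega
    have hw : (0:ℝ) < a ^ (i - 1) := by positivity
    have hX : (0:ℝ) < b ^ (i - 1) := by positivity
    have hyz : (1:ℝ) < a ^ (k - i) * b ^ (k - i) := by
      rw [← mul_pow]; exact one_lt_pow₀ hab1 (by omega)
    rw [p3, p4, p1, p2]
    nlinarith [mul_pos (mul_pos hi0 (mul_pos hw hX))
      (mul_pos (sub_pos.mpr h4) (sub_pos.mpr hyz)), h4, hyz, hi0, hw, hX]
  constructor
  · intro a ha b hb hab
    simp only [Set.mem_Ioi] at ha hb
    have ha0 : (0 : ℝ) < a := lt_trans one_pos ha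
    have hb0 : (0 : ℝ) < b := lt_trans one_pos hb
    rw [hform a ha0, hform b hb0]
    apply (add_lt_add_iff_left 1).mpr
    rw [div_lt_div_iff₀ (hT b hb0) (hT a ha0)]
    have hqk : (0 : ℝ) < (q : ℝ) * (k : ℝ) := by
      have : (0:ℝ) < (q:ℝ) := by exact_mod_cast Nat.lt_of_lt_of_le Nat.zero_lt_two hq
      have : (0:ℝ) < (k:ℝ) := by exact_mod_cast Nat.lt_of_lt_of_le Nat.zero_lt_two hk
      positivity
    have hk' := key a b ha hab
    nlinarith [mul_lt_mul_of_pos_left hk' hqk]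
  · rw [hη 1]
    have hs1 : (∑ i ∈ Finset.Icc 1 (k - 1), (1 : ℝ) ^ i) = (k : ℝ) - 1 := by
      simp [Nat.card_Icc]
      have : k - 1 ≤ k := by omega
      push_cast [Nat.cast_sub (by omega : 1 ≤ k)]
      ring
    rw [hs1]
    simp
end
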